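/- arXiv:1903.04279 — 6 statements merged into one kernel-verified Lean document; each statement's English description precedes it below -/
import Mathlib

section
/- With the notation of the collisional transformation (c, v₁*, v₂*, v₃* as above), the transformed relative velocities satisfy |v₁*-v₂*|² + |v₁*-v₃*|² + |v₂*-v₃*|² = |v₁-v₂|² + |v₁-v₃|² + |v₂-v₃|². -/
open RealInnerProductSpace

theorem collisional_transformation_relative_velocities (d : ℕ) (hd : 2 ≤ d)
    (ω₁ ω₂ : EuclideanSpace ℝ (Fin d)) (hω : ‖ω₁‖ ^ 2 + ‖ω₂‖ ^ 2 = 1)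
    (v₁ v₂ v₃ : EuclideanSpace ℝ (Fin d)) :
    let c := (⟪ω₁, v₂ - v₁⟫ + ⟪ω₂, v₃ - v₁⟫) / (1 + ⟪ω₁, ω₂⟫)
    let w₁ := v₁ + c • (ω₁ + ω₂)
    let w₂ := v₂ - c • ω₁
    let w₃ := v₃ - c • ω₂
    ‖w₁ - w₂‖ ^ 2 + ‖w₁ - w₃‖ ^ 2 + ‖w₂ - w₃‖ ^ 2 =
      ‖v₁ - v₂‖ ^ 2 + ‖v₁ - v₃‖ ^ 2 + ‖v₂ - v₃‖ ^ 2 := by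
  intro c w₁ w₂ w₃
  have hcs : |⟪ω₁, ω₂⟫| ≤ ‖ω₁‖ * ‖ω₂‖ := abs_real_inner_le_norm ω₁ ω₂
  have hne : 1 + ⟪ω₁, ω₂⟫ ≠ 0 := by
    have h1 : |⟪ω₁, ω₂⟫| ≤ 1 / 2 := by nlinarith [sq_nonneg (‖ω₁‖ - ‖ω₂‖), abs_nonneg ⟪ω₁, ω₂⟫]
    have := abs_le.mp h1
    intro h; linarith [this.1]
  have key : c * (1 + ⟪ω₁, ω₂⟫) = ⟪ω₁, v₂ - v₁⟫ + ⟪ω₂, v₃ - v₁⟫ :=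
    div_mul_cancel₀ _ hne
  have hn : ⟪ω₁, ω₁⟫ + ⟪ω₂, ω₂⟫ = (1 : ℝ) := by
    rw [real_inner_self_eq_norm_sq, real_inner_self_eq_norm_sq]; exact hω
  show ‖v₁ + c • (ω₁ + ω₂) - (v₂ - c • ω₁)‖ ^ 2 +
      ‖v₁ + c • (ω₁ + ω₂) - (v₃ - c • ω₂)‖ ^ 2 +
      ‖v₂ - c • ω₁ - (v₃ - c • ω₂)‖ ^ 2 = _
  clear_value w₁ w₂ w₃
  clear hd hcs w₁ w₂ w₃
  clear_value c
  simp only [inner_sub_left, inner_sub_right] at key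
  simp only [← real_inner_self_eq_norm_sq, inner_sub_left, inner_sub_right,
    inner_add_left, inner_add_right, real_inner_smul_left, real_inner_smul_right]
  simp only [real_inner_comm v₂ v₁, real_inner_comm v₃ v₁, real_inner_comm v₃ v₂,
    real_inner_comm ω₂ ω₁, real_inner_comm v₁ ω₁, real_inner_comm v₂ ω₁,
    real_inner_comm v₃ ω₁, real_inner_comm v₁ ω₂, real_inner_comm v₂ ω₂,
    real_inner_comm v₃ ω₂] at key ⊢
  linear_combination 6 * c ^ 2 * hn + 6 * c * key
end

section
/- Let d ≥ 2 and v₁,v₂,v₃ ∈ ℝ^d. A triple (v₁',v₂',v₃') ∈ ℝ^{3d} satisfies the conservation system v₁'+v₂'+v₃' = v₁+v₂+v₃ and |v₁'|²+|v₂'|²+|v₃'|² = |v₁|²+|v₂|²+|v₃|² if and only if there exists (ω₁,ω₂) ∈ ℝ^{2d} with |ω₁|²+|ω₂|² = 1 such that v₁' = v₁ + c(ω₁+ω₂), v₂' = v₂ - cω₁, v₃' = v₃ - cω₂, where c = (⟨ω₁,v₂-v₁⟩+⟨ω₂,v₃-v₁⟩)/(1+⟨ω₁,ω₂⟩). -/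
set_option maxHeartbeats 1000000
open RealInnerProductSpace

lemma exists_unit_orthogonal {d : ℕ} (hd : 2 ≤ d) (w : EuclideanSpace ℝ (Fin d)) :
    ∃ ω : EuclideanSpace ℝ (Fin d), ‖ω‖ = 1 ∧ ⟪ω, w⟫ = 0 := by
  have hfr : Module.finrank ℝ (EuclideanSpace ℝ (Fin d)) = d := by simp
  have h1 : Module.finrank ℝ (ℝ ∙ w) ≤ 1 := by
    classical
    simpa using finrank_span_le_card ({w} : Set (EuclideanSpace ℝ (Fin d)))
  have h2 : Module.finrank ℝ (ℝ ∙ w) + Module.finrank ℝ (ℝ ∙ w)ᗮ = d := by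
    rw [Submodule.finrank_add_finrank_orthogonal, hfr]
  have hpos : 0 < Module.finrank ℝ (ℝ ∙ w)ᗮ := by omega
  have hne : (ℝ ∙ w)ᗮ ≠ ⊥ := by
    intro h
    rw [h] at hpos
    simp at hpos
  obtain ⟨y, hy, hy0⟩ := Submodule.exists_mem_ne_zero_of_ne_bot hne
  refine ⟨‖y‖⁻¹ • y, ?_, ?_⟩
  · rw [norm_smul]
    simp [norm_ne_zero_iff.mpr hy0]
  · have : ⟪w, y⟫ = 0 := hy w (Submodule.mem_span_singleton_self w)
    rw [real_inner_smul_left, real_inner_comm, this, mul_zero]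

theorem momentum_energy_system_general_solution (d : ℕ) (hd : 2 ≤ d)
    (v₁ v₂ v₃ v₁' v₂' v₃' : EuclideanSpace ℝ (Fin d)) :
    (v₁' + v₂' + v₃' = v₁ + v₂ + v₃ ∧
        ‖v₁'‖ ^ 2 + ‖v₂'‖ ^ 2 + ‖v₃'‖ ^ 2 = ‖v₁‖ ^ 2 + ‖v₂‖ ^ 2 + ‖v₃‖ ^ 2) ↔
      ∃ ω₁ ω₂ : EuclideanSpace ℝ (Fin d), ‖ω₁‖ ^ 2 + ‖ω₂‖ ^ 2 = 1 ∧
        v₁' = v₁ + ((⟪ω₁, v₂ - v₁⟫ + ⟪ω₂, v₃ - v₁⟫) / (1 + ⟪ω₁, ω₂⟫)) • (ω₁ + ω₂) ∧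
        v₂' = v₂ - ((⟪ω₁, v₂ - v₁⟫ + ⟪ω₂, v₃ - v₁⟫) / (1 + ⟪ω₁, ω₂⟫)) • ω₁ ∧
        v₃' = v₃ - ((⟪ω₁, v₂ - v₁⟫ + ⟪ω₂, v₃ - v₁⟫) / (1 + ⟪ω₁, ω₂⟫)) • ω₂ := by
  constructor
  · rintro ⟨hmom, hen⟩
    set u₂ := v₂' - v₂ with hu₂
    set u₃ := v₃' - v₃ with hu₃
    have h2 : v₂' = v₂ + u₂ := by rw [hu₂]; abel
    have h3 : v₃' = v₃ + u₃ := by rw [hu₃]; abel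
    have h1 : v₁' = v₁ - u₂ - u₃ := by
      have h : v₁' - (v₁ - u₂ - u₃) = (v₁' + v₂' + v₃') - (v₁ + v₂ + v₃) := by
        rw [hu₂, hu₃]; abel
      rw [hmom, sub_self] at h
      exact sub_eq_zero.mp h
    have E : ⟪v₂, u₂⟫ - ⟪v₁, u₂⟫ + ⟪v₃, u₃⟫ - ⟪v₁, u₃⟫
        + ⟪u₂, u₂⟫ + ⟪u₃, u₃⟫ + ⟪u₃, u₂⟫ = 0 := by
      have hen' := hen
      rw [h1, h2, h3] at hen'
      simp only [← real_inner_self_eq_norm_sq, inner_add_left, inner_add_right,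
        inner_sub_left, inner_sub_right, real_inner_comm v₁ u₂, real_inner_comm v₁ u₃,
        real_inner_comm v₂ u₂, real_inner_comm v₃ u₃, real_inner_comm u₃ u₂] at hen'
      linear_combination hen' / 2
    clear_value u₂ u₃
    clear hmom hen hu₂ hu₃
    subst h1; subst h2; subst h3
    by_cases hzero : u₂ = 0 ∧ u₃ = 0
    · obtain ⟨hz2, hz3⟩ := hzero
      obtain ⟨ω, hω1, hωo⟩ := exists_unit_orthogonal hd (v₂ - v₁)
      refine ⟨ω, 0, by simp [hω1], ?_, ?_, ?_⟩ <;>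
        simp [hωo, hz2, hz3]
    · -- nondegenerate case
      have hsum : 0 < ‖u₂‖ ^ 2 + ‖u₃‖ ^ 2 := by
        rcases not_and_or.mp hzero with h | h
        · have : 0 < ‖u₂‖ := norm_pos_iff.mpr h
          positivity
        · have : 0 < ‖u₃‖ := norm_pos_iff.mpr h
          positivity
      set s := Real.sqrt (‖u₂‖ ^ 2 + ‖u₃‖ ^ 2) with hsdef
      have hs2 : s ^ 2 = ‖u₂‖ ^ 2 + ‖u₃‖ ^ 2 := Real.sq_sqrt hsum.le
      have hs : 0 < s := Real.sqrt_pos.mpr hsum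
      have hs0 : s ≠ 0 := hs.ne'
      set T := ‖u₂‖ ^ 2 + ‖u₃‖ ^ 2 + ⟪u₂, u₃⟫ with hTdef
      have hT : 0 < T := by
        have hcs : -(‖u₂‖ * ‖u₃‖) ≤ ⟪u₂, u₃⟫ :=
          neg_le_of_abs_le (abs_real_inner_le_norm u₂ u₃)
        nlinarith [sq_nonneg (‖u₂‖ - ‖u₃‖), hsum]
      refine ⟨(-(s⁻¹)) • u₂, (-(s⁻¹)) • u₃, ?_, ?_, ?_, ?_⟩
      · rw [norm_smul, norm_smul]
        rw [mul_pow, mul_pow]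
        have : ‖-(s⁻¹)‖ ^ 2 = (s ^ 2)⁻¹ := by
          rw [norm_neg, Real.norm_eq_abs, sq_abs, ← inv_pow]
        rw [this]
        field_simp [hs2]
        exact hs2.symm
      all_goals {
        have hN : ⟪(-(s⁻¹)) • u₂, v₂ - v₁⟫ + ⟪(-(s⁻¹)) • u₃, v₃ - v₁⟫ = s⁻¹ * T := by
          simp only [real_inner_smul_left, inner_sub_right,
            real_inner_comm u₂ v₂, real_inner_comm u₂ v₁, real_inner_comm u₃ v₃,
            real_inner_comm u₃ v₁]
          have e2 : ⟪u₂, u₂⟫ = ‖u₂‖ ^ 2 := real_inner_self_eq_norm_sq u₂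
          have e3 : ⟪u₃, u₃⟫ = ‖u₃‖ ^ 2 := real_inner_self_eq_norm_sq u₃
          rw [hTdef]
          linear_combination (-(s⁻¹)) * E + s⁻¹ * e2 + s⁻¹ * e3
            + s⁻¹ * (real_inner_comm u₃ u₂)
            + s⁻¹ * (real_inner_comm u₂ v₂) - s⁻¹ * (real_inner_comm u₂ v₁)
            + s⁻¹ * (real_inner_comm u₃ v₃) - s⁻¹ * (real_inner_comm u₃ v₁)
            - 2 * s⁻¹ * (real_inner_comm u₃ u₂)
        have hD : 1 + ⟪(-(s⁻¹)) • u₂, (-(s⁻¹)) • u₃⟫ = (s ^ 2)⁻¹ * T := by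
          rw [real_inner_smul_left, real_inner_smul_right, hTdef, ← hs2]
          field_simp
        have hcs : (⟪(-(s⁻¹)) • u₂, v₂ - v₁⟫ + ⟪(-(s⁻¹)) • u₃, v₃ - v₁⟫) /
            (1 + ⟪(-(s⁻¹)) • u₂, (-(s⁻¹)) • u₃⟫) = s := by
          rw [hN, hD]
          field_simp
        rw [hcs]
        match_scalars <;> field_simp
      }
  · rintro ⟨ω₁, ω₂, hω, h1, h2, h3⟩
    set c := (⟪ω₁, v₂ - v₁⟫ + ⟪ω₂, v₃ - v₁⟫) / (1 + ⟪ω₁, ω₂⟫) with hc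
    clear_value c
    have hω' : ⟪ω₁, ω₁⟫ + ⟪ω₂, ω₂⟫ = 1 := by
      rw [real_inner_self_eq_norm_sq, real_inner_self_eq_norm_sq]; exact hω
    have hkey : c * (1 + ⟪ω₁, ω₂⟫) = ⟪ω₁, v₂ - v₁⟫ + ⟪ω₂, v₃ - v₁⟫ ∨ c = 0 := by
      by_cases h : (1 + ⟪ω₁, ω₂⟫) = 0
      · right; rw [hc, h, div_zero]
      · left; rw [hc, div_mul_cancel₀ _ h]
    constructor
    · rw [h1, h2, h3]; module
    · rw [h1, h2, h3]
      simp only [← real_inner_self_eq_norm_sq, inner_add_left, inner_add_right,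
        inner_sub_left, inner_sub_right, real_inner_smul_left, real_inner_smul_right]
      rcases hkey with hk | hk
      · simp only [inner_sub_right] at hk
        linear_combination (2 * c) * hk + (2 * c^2) * hω'
          + c * (real_inner_comm v₁ ω₁) + c * (real_inner_comm v₁ ω₂)
          - c * (real_inner_comm v₂ ω₁) - c * (real_inner_comm v₃ ω₂)
          + (c^2) * (real_inner_comm ω₂ ω₁)
          + (2*c) * (real_inner_comm ω₁ v₁) + (2*c) * (real_inner_comm ω₂ v₁)
          - (2*c) * (real_inner_comm ω₁ v₂) - (2*c) * (real_inner_comm ω₂ v₃)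
          - (2*c^2) * (real_inner_comm ω₂ ω₁)
      · rw [hk]; ring
end

section
/- Let d ≥ 2. A continuous function φ : ℝ^d → ℝ is a collision invariant, i.e. φ(v₁*) + φ(v₂*) + φ(v₃*) = φ(v₁) + φ(v₂) + φ(v₃) for all (ω₁,ω₂) with |ω₁|²+|ω₂|²=1 and all v₁,v₂,v₃ ∈ ℝ^d, if and only if there exist α, c ∈ ℝ and b ∈ ℝ^d such that φ(v) = α + ⟨b,v⟩ + c|v|² for all v. -/
open RealInnerProductSpace

/-- The ternary collisional transformation `T_{ω₁,ω₂}` on triples of velocities. -/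
noncomputable def collT {d : ℕ} (ω₁ ω₂ : EuclideanSpace ℝ (Fin d)) :
    EuclideanSpace ℝ (Fin d) × EuclideanSpace ℝ (Fin d) × EuclideanSpace ℝ (Fin d) →
      EuclideanSpace ℝ (Fin d) × EuclideanSpace ℝ (Fin d) × EuclideanSpace ℝ (Fin d) :=
  fun p =>
    let c := (⟪ω₁, p.2.1 - p.1⟫ + ⟪ω₂, p.2.2 - p.1⟫) / (1 + ⟪ω₁, ω₂⟫)
    (p.1 + c • (ω₁ + ω₂), p.2.1 - c • ω₁, p.2.2 - c • ω₂)

section aux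
variable {d : ℕ}
local notation "E" => EuclideanSpace ℝ (Fin d)

private lemma lin_of_add (g : ℝ → ℝ) (hadd : ∀ s t, g (s + t) = g s + g t)
    (hc : Continuous g) : ∀ t, g t = t * g 1 := by
  intro t
  have h := ((AddMonoidHom.mk' g hadd).toRealLinearMap hc).map_smul t (1 : ℝ)
  simp [smul_eq_mul] at h
  exact h

private lemma single_orth {i j : Fin d} (hij : i ≠ j) (a b : ℝ) :
    ⟪(a • EuclideanSpace.single i 1 : E), b • EuclideanSpace.single j 1⟫ = 0 := by
  simp [real_inner_smul_left, real_inner_smul_right, EuclideanSpace.inner_single_left,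
    EuclideanSpace.single_apply, hij, Ne.symm hij]

private lemma norm_eq_of_sq {X Y : E} (h : ‖X‖ ^ 2 = ‖Y‖ ^ 2) : ‖X‖ = ‖Y‖ := by
  rw [← Real.sqrt_sq (norm_nonneg X), ← Real.sqrt_sq (norm_nonneg Y), h]

private lemma denom_pos (ω₁ ω₂ : E) (h : ‖ω₁‖ ^ 2 + ‖ω₂‖ ^ 2 = 1) :
    0 < 1 + ⟪ω₁, ω₂⟫ := by
  have h1 := abs_real_inner_le_norm ω₁ ω₂
  have h2 := abs_le.mp h1
  nlinarith [sq_nonneg (‖ω₁‖ - ‖ω₂‖), h2.1]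

private lemma collT_eq (ω₁ ω₂ v₁ v₂ v₃ : E) :
    collT ω₁ ω₂ (v₁, v₂, v₃) =
      (v₁ + ((⟪ω₁, v₂ - v₁⟫ + ⟪ω₂, v₃ - v₁⟫) / (1 + ⟪ω₁, ω₂⟫)) • (ω₁ + ω₂),
       v₂ - ((⟪ω₁, v₂ - v₁⟫ + ⟪ω₂, v₃ - v₁⟫) / (1 + ⟪ω₁, ω₂⟫)) • ω₁,
       v₃ - ((⟪ω₁, v₂ - v₁⟫ + ⟪ω₂, v₃ - v₁⟫) / (1 + ⟪ω₁, ω₂⟫)) • ω₂) := rfl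

private lemma collT_mom (ω₁ ω₂ v₁ v₂ v₃ : E) :
    (collT ω₁ ω₂ (v₁, v₂, v₃)).1 + (collT ω₁ ω₂ (v₁, v₂, v₃)).2.1 +
      (collT ω₁ ω₂ (v₁, v₂, v₃)).2.2 = v₁ + v₂ + v₃ := by
  rw [collT_eq]
  module

private lemma collT_energy (ω₁ ω₂ : E) (h : ‖ω₁‖ ^ 2 + ‖ω₂‖ ^ 2 = 1) (v₁ v₂ v₃ : E) :
    ‖(collT ω₁ ω₂ (v₁, v₂, v₃)).1‖ ^ 2 + ‖(collT ω₁ ω₂ (v₁, v₂, v₃)).2.1‖ ^ 2 +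
      ‖(collT ω₁ ω₂ (v₁, v₂, v₃)).2.2‖ ^ 2 = ‖v₁‖ ^ 2 + ‖v₂‖ ^ 2 + ‖v₃‖ ^ 2 := by
  have hD := denom_pos ω₁ ω₂ h
  rw [collT_eq]
  set t := (⟪ω₁, v₂ - v₁⟫ + ⟪ω₂, v₃ - v₁⟫) / (1 + ⟪ω₁, ω₂⟫) with htdef
  have hteq : t * (1 + ⟪ω₁, ω₂⟫) = ⟪ω₁, v₂ - v₁⟫ + ⟪ω₂, v₃ - v₁⟫ :=
    div_mul_cancel₀ _ hD.ne'
  simp only [inner_sub_right] at hteq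
  simp only [norm_add_sq_real, norm_sub_sq_real, real_inner_smul_right, inner_add_right,
    norm_smul, mul_pow, sq_abs, Real.norm_eq_abs]
  rw [real_inner_comm ω₁ v₁, real_inner_comm ω₂ v₁, real_inner_comm ω₁ v₂,
    real_inner_comm ω₂ v₃]
  linear_combination (2 * t) * hteq + (2 * t ^ 2) * h

private lemma even_char (hd : 2 ≤ d) (ψ : E → ℝ) (hc : Continuous ψ)
    (heven : ∀ v, ψ (-v) = ψ v)
    (hadd : ∀ x y : E, ⟪x, y⟫ = 0 → ψ (x + y) = ψ x + ψ y) :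
    ∃ c : ℝ, ∀ v, ψ v = c * ‖v‖ ^ 2 := by
  have h0 : ψ 0 = 0 := by
    have := hadd 0 0 (by simp)
    simpa using this.symm
  -- same norm implies same value
  have hsame : ∀ x y : E, ‖x‖ = ‖y‖ → ψ x = ψ y := by
    intro x y hxy
    have hab : ⟪((2:ℝ)⁻¹ • (x + y) : E), (2:ℝ)⁻¹ • (x - y)⟫ = 0 := by
      simp only [real_inner_smul_left, real_inner_smul_right, inner_add_left, inner_sub_right,
        real_inner_self_eq_norm_sq, real_inner_comm y x]
      rw [hxy]; ring
    have hx : ((2:ℝ)⁻¹ • (x + y) : E) + (2:ℝ)⁻¹ • (x - y) = x := by module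
    have hy : ((2:ℝ)⁻¹ • (x + y) : E) + -((2:ℝ)⁻¹ • (x - y)) = y := by module
    have h1 := hadd _ _ hab
    rw [hx] at h1
    have h2 := hadd ((2:ℝ)⁻¹ • (x + y)) (-((2:ℝ)⁻¹ • (x - y)))
      (by rw [inner_neg_right, hab, neg_zero])
    rw [hy, heven] at h2
    rw [h1, h2]
  -- two orthonormal vectors
  have h01 : ((⟨0, by omega⟩ : Fin d)) ≠ (⟨1, by omega⟩ : Fin d) := by simp
  set u : E := EuclideanSpace.single ⟨0, by omega⟩ 1 with hu
  set w : E := EuclideanSpace.single ⟨1, by omega⟩ 1 with hw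
  have hun : ‖u‖ = 1 := by simp [hu, EuclideanSpace.norm_single]
  have hwn : ‖w‖ = 1 := by simp [hw, EuclideanSpace.norm_single]
  set F : ℝ → ℝ := fun t => ψ (Real.sqrt t • u) with hF
  have hFcont : Continuous F := hc.comp (Real.continuous_sqrt.smul continuous_const)
  have hF0 : F 0 = 0 := by simp [hF, h0]
  have hFv : ∀ v : E, ψ v = F (‖v‖ ^ 2) := by
    intro v
    have : Real.sqrt (‖v‖ ^ 2) = ‖v‖ := Real.sqrt_sq (norm_nonneg v)
    rw [hF]; dsimp only
    rw [this]
    exact hsame v (‖v‖ • u) (by rw [norm_smul, hun, Real.norm_eq_abs, abs_norm, mul_one])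
  have hFw : ∀ t : ℝ, ψ (Real.sqrt t • w) = F t := by
    intro t
    exact hsame _ _ (by rw [norm_smul, norm_smul, hun, hwn])
  have hFadd : ∀ s t : ℝ, 0 ≤ s → 0 ≤ t → F (s + t) = F s + F t := by
    intro s t hs ht
    have horth : ⟪(Real.sqrt s • u : E), Real.sqrt t • w⟫ = 0 := by
      rw [hu, hw]; exact single_orth h01 _ _
    have hnorm : ‖(Real.sqrt (s + t) • u : E)‖ = ‖(Real.sqrt s • u : E) + Real.sqrt t • w‖ := by
      apply norm_eq_of_sq
      rw [norm_add_sq_real, horth]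
      simp only [norm_smul, hun, hwn, Real.norm_eq_abs, mul_one, mul_pow, sq_abs,
        Real.sq_sqrt hs, Real.sq_sqrt ht, Real.sq_sqrt (by linarith : (0:ℝ) ≤ s + t)]
      ring
    calc F (s + t) = ψ (Real.sqrt s • u + Real.sqrt t • w) := hsame _ _ hnorm
      _ = ψ (Real.sqrt s • u) + ψ (Real.sqrt t • w) := hadd _ _ horth
      _ = F s + F t := by rw [hFw]
  -- extend to all of ℝ
  set g : ℝ → ℝ := fun t => F (max t 0) - F (max (-t) 0) with hg
  have hgpos : ∀ t : ℝ, 0 ≤ t → g t = F t := by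
    intro t ht
    rw [hg]; dsimp only
    rw [max_eq_left ht, max_eq_right (by linarith), hF0, sub_zero]
  have hgneg : ∀ t : ℝ, t ≤ 0 → g t = -F (-t) := by
    intro t ht
    rw [hg]; dsimp only
    rw [max_eq_right ht, max_eq_left (by linarith), hF0, zero_sub]
  have hgodd : ∀ t, g (-t) = -g t := by
    intro t
    rcases le_total 0 t with h | h
    · rw [hgneg _ (by linarith), hgpos _ h, neg_neg]
    · rw [hgpos _ (by linarith), hgneg _ h, neg_neg]
  have hkey : ∀ s t : ℝ, 0 ≤ s → t ≤ 0 → g (s + t) = g s + g t := by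
    intro s t hs ht
    rcases le_total 0 (s + t) with h | h
    · have : F s = F (s + t) + F (-t) := by
        rw [← hFadd _ _ h (by linarith), show s + t + -t = s by ring]
      rw [hgpos _ h, hgpos _ hs, hgneg _ ht]; linarith
    · have : F (-t) = F (-(s + t)) + F s := by
        rw [← hFadd _ _ (by linarith) hs, show -(s + t) + s = -t by ring]
      rw [hgneg _ h, hgpos _ hs, hgneg _ ht]; linarith
  have hgadd : ∀ s t : ℝ, g (s + t) = g s + g t := by
    intro s t
    rcases le_total 0 s with hs | hs <;> rcases le_total 0 t with ht | ht
    · rw [hgpos _ hs, hgpos _ ht, hgpos _ (by linarith), hFadd _ _ hs ht]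
    · exact hkey s t hs ht
    · rw [add_comm, add_comm (g s)]; exact hkey t s ht hs
    · have hthis : g (-s + -t) = g (-s) + g (-t) := by
        rw [hgpos (-s + -t) (by linarith), hgpos (-s) (by linarith), hgpos (-t) (by linarith),
          hFadd _ _ (by linarith) (by linarith)]
      have h2 := hgodd (s + t)
      rw [show -(s+t) = -s + -t by ring] at h2
      rw [hthis, hgodd, hgodd] at h2
      linarith
  have hgcont : Continuous g := by
    apply Continuous.sub
    · exact hFcont.comp (continuous_id.max continuous_const)
    · exact hFcont.comp (continuous_neg.max continuous_const)
  have hglin := lin_of_add g hgadd hgcont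
  refine ⟨g 1, fun v => ?_⟩
  rw [hFv v, ← hgpos _ (sq_nonneg ‖v‖), hglin, mul_comm]

private lemma odd_char (hd : 2 ≤ d) (ψ : E → ℝ) (hc : Continuous ψ)
    (hodd : ∀ v, ψ (-v) = -ψ v)
    (hadd : ∀ x y : E, ⟪x, y⟫ = 0 → ψ (x + y) = ψ x + ψ y) :
    ∃ b : E, ∀ v, ψ v = ⟪b, v⟫ := by
  have h0 : ψ 0 = 0 := by
    have := hadd 0 0 (by simp)
    simpa using this.symm
  -- doubling along a coordinate axis
  have hdouble : ∀ (i j : Fin d), i ≠ j → ∀ t : ℝ,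
      ψ ((2 * t) • EuclideanSpace.single j 1) = 2 * ψ (t • EuclideanSpace.single j 1) := by
    intro i j hij t
    set s : E := EuclideanSpace.single j 1 with hs
    set s' : E := EuclideanSpace.single i 1 with hs'
    have hxu : ⟪(t • s : E), t • s'⟫ = 0 := single_orth (Ne.symm hij) t t
    have h2 : ⟪(t • s + t • s' : E), t • s - t • s'⟫ = 0 := by
      rw [inner_add_left, inner_sub_right, inner_sub_right, hxu]
      rw [real_inner_comm (t • s') (t • s)] at hxu
      rw [hxu, real_inner_self_eq_norm_sq, real_inner_self_eq_norm_sq]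
      rw [hs, hs', norm_smul, norm_smul, EuclideanSpace.norm_single, EuclideanSpace.norm_single]
      ring
    have hsum : ((2 * t) • s : E) = (t • s + t • s') + (t • s - t • s') := by module
    rw [hsum, hadd _ _ h2, hadd _ _ hxu,
      show (t • s - t • s' : E) = t • s + -(t • s') from sub_eq_add_neg _ _,
      hadd _ _ (by rw [inner_neg_right, hxu, neg_zero]), hodd]
    ring
  -- linearity along each coordinate axis
  have hline : ∀ i : Fin d, ∀ t : ℝ,
      ψ (t • EuclideanSpace.single i 1) = t * ψ (EuclideanSpace.single i 1) := by
    intro i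
    have : Nontrivial (Fin d) := Fin.nontrivial_iff_two_le.mpr hd
    obtain ⟨j, hji⟩ := exists_ne i
    set s : E := EuclideanSpace.single i 1 with hs
    set w : E := EuclideanSpace.single j 1 with hw
    set g : ℝ → ℝ := fun t => ψ (t • s) with hg
    set k : ℝ → ℝ := fun t => ψ (t • w) with hk
    have hgodd : ∀ t, g (-t) = -g t := by
      intro t; rw [hg]; dsimp only
      rw [show ((-t) • s : E) = -(t • s) by module, hodd]
    have hg0 : g 0 = 0 := by rw [hg]; dsimp only; rw [zero_smul, h0]
    have hkdouble : ∀ t, k (2 * t) = 2 * k t := fun t => hdouble i j (Ne.symm hji) t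
    have hmix : ∀ a b c e : ℝ, a * c + b * e = 0 →
        g (a + c) + k (b + e) = g a + k b + (g c + k e) := by
      intro a b c e hrel
      have horth : ⟪(a • s + b • w : E), c • s + e • w⟫ = 0 := by
        rw [inner_add_left, inner_add_right, inner_add_right]
        rw [hs, hw]
        rw [single_orth (Ne.symm hji) a e, single_orth hji b c]
        have h1 : ⟪(a • EuclideanSpace.single i 1 : E), c • EuclideanSpace.single i 1⟫
            = a * c := by
          rw [real_inner_smul_left, real_inner_smul_right, real_inner_self_eq_norm_sq,
            EuclideanSpace.norm_single]
          simp
        have h2 : ⟪(b • EuclideanSpace.single j 1 : E), e • EuclideanSpace.single j 1⟫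
            = b * e := by
          rw [real_inner_smul_left, real_inner_smul_right, real_inner_self_eq_norm_sq,
            EuclideanSpace.norm_single]
          simp
        rw [h1, h2]; linarith
      have hso : ⟪(a • s : E), b • w⟫ = 0 := single_orth (Ne.symm hji) a b
      have hso2 : ⟪(c • s : E), e • w⟫ = 0 := single_orth (Ne.symm hji) c e
      have hso3 : ⟪((a + c) • s : E), (b + e) • w⟫ = 0 := single_orth (Ne.symm hji) _ _
      have hL : ψ ((a + c) • s + (b + e) • w) = g (a + c) + k (b + e) := hadd _ _ hso3
      have hsplit : ((a + c) • s + (b + e) • w : E) = (a • s + b • w) + (c • s + e • w) := by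
        module
      rw [← hL, hsplit, hadd _ _ horth, hadd _ _ hso, hadd _ _ hso2]
    have hgneg : ∀ a c : ℝ, a * c < 0 → g (a + c) = g a + g c := by
      intro a c hac
      have hb : (0:ℝ) ≤ -(a * c) := by linarith
      set b := Real.sqrt (-(a * c)) with hbdef
      have hbb : b * b = -(a * c) := Real.mul_self_sqrt hb
      have := hmix a b c b (by rw [hbb]; ring)
      rw [show b + b = 2 * b by ring, hkdouble] at this
      linarith
    have hgadd : ∀ a c : ℝ, g (a + c) = g a + g c := by
      intro a c
      rcases lt_trichotomy (a * c) 0 with h | h | h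
      · exact hgneg a c h
      · rcases mul_eq_zero.mp h with h | h
        · rw [h, zero_add, hg0, zero_add]
        · rw [h, add_zero, hg0, add_zero]
      · have hc0 : c ≠ 0 := by rintro rfl; simp at h
        have : g ((a + c) + (-c)) = g (a + c) + g (-c) := by
          apply hgneg
          nlinarith [mul_self_pos.mpr hc0]
        rw [show a + c + -c = a by ring, hgodd] at this
        linarith
    have hgcont : Continuous g := hc.comp (continuous_id.smul continuous_const)
    intro t
    have := lin_of_add g hgadd hgcont t
    rw [hg] at this; dsimp only at this
    rw [one_smul] at this
    exact this
  -- decompose an arbitrary vector into coordinates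
  classical
  have hdecomp : ∀ v : E, ψ v = ∑ i : Fin d, ψ (v i • EuclideanSpace.single i 1) := by
    intro v
    have hfin : ∀ S : Finset (Fin d),
        ψ (∑ i ∈ S, v i • EuclideanSpace.single i 1) =
          ∑ i ∈ S, ψ (v i • EuclideanSpace.single i 1) := by
      intro S
      induction S using Finset.induction_on with
      | empty => simpa using h0
      | insert a S' ha ih =>
        rw [Finset.sum_insert ha, Finset.sum_insert ha, ← ih]
        apply hadd
        rw [inner_sum]
        apply Finset.sum_eq_zero
        intro i hi
        exact single_orth (by rintro rfl; exact ha hi) _ _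
    have hv : ∑ i : Fin d, v i • EuclideanSpace.single i 1 = v := by
      have := (EuclideanSpace.basisFun (Fin d) ℝ).sum_repr v
      simpa using this
    have h2 := hfin Finset.univ
    rw [hv] at h2
    exact h2
  refine ⟨∑ i : Fin d, ψ (EuclideanSpace.single i 1) • EuclideanSpace.single i 1, fun v => ?_⟩
  rw [hdecomp v, sum_inner]
  apply Finset.sum_congr rfl
  intro i _
  rw [hline i (v i), real_inner_smul_left, EuclideanSpace.inner_single_left]
  simp [mul_comm]

end aux

theorem collision_invariants_characterization (d : ℕ) (hd : 2 ≤ d)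
    (φ : EuclideanSpace ℝ (Fin d) → ℝ) (hcont : Continuous φ) :
    (∀ (ω₁ ω₂ v₁ v₂ v₃ : EuclideanSpace ℝ (Fin d)), ‖ω₁‖ ^ 2 + ‖ω₂‖ ^ 2 = 1 →
        φ (collT ω₁ ω₂ (v₁, v₂, v₃)).1 + φ (collT ω₁ ω₂ (v₁, v₂, v₃)).2.1 +
            φ (collT ω₁ ω₂ (v₁, v₂, v₃)).2.2 =
          φ v₁ + φ v₂ + φ v₃) ↔
      ∃ (α c : ℝ) (b : EuclideanSpace ℝ (Fin d)),
        ∀ v, φ v = α + ⟪b, v⟫ + c * ‖v‖ ^ 2 := by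
  constructor
  · intro h
    -- binary collision invariance
    have hbin : ∀ ω v₁ v₂ : EuclideanSpace ℝ (Fin d), ‖ω‖ = 1 →
        φ (v₁ + ⟪ω, v₂ - v₁⟫ • ω) + φ (v₂ - ⟪ω, v₂ - v₁⟫ • ω) = φ v₁ + φ v₂ := by
      intro ω v₁ v₂ hω
      have hh := h ω 0 v₁ v₂ 0 (by simp [hω])
      rw [collT_eq] at hh
      simp only [inner_zero_left, add_zero, inner_zero_right, div_one, smul_zero,
        sub_zero, zero_sub] at hh
      linarith
    -- orthogonal additivity
    have horth : ∀ x y : EuclideanSpace ℝ (Fin d), ⟪x, y⟫ = 0 →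
        φ (x + y) + φ 0 = φ x + φ y := by
      intro x y hxy
      by_cases hy : y = 0
      · rw [hy]; simp
      · have hyn : ‖y‖ ≠ 0 := norm_ne_zero_iff.mpr hy
        have hω : ‖(‖y‖⁻¹ • y : EuclideanSpace ℝ (Fin d))‖ = 1 := by
          rw [norm_smul, Real.norm_eq_abs, abs_inv, abs_norm, inv_mul_cancel₀ hyn]
        have hyx : ⟪y, x⟫ = 0 := by rw [real_inner_comm]; exact hxy
        have hcval : ⟪(‖y‖⁻¹ • y : EuclideanSpace ℝ (Fin d)), y - x⟫ = ‖y‖ := by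
          rw [real_inner_smul_left, inner_sub_right, real_inner_self_eq_norm_sq, hyx,
            sub_zero, sq]
          field_simp
        have hb := hbin (‖y‖⁻¹ • y) x y hω
        rw [hcval] at hb
        rw [smul_smul, mul_inv_cancel₀ hyn, one_smul, sub_self] at hb
        exact hb
    set ψe : EuclideanSpace ℝ (Fin d) → ℝ := fun v => (φ v + φ (-v)) / 2 - φ 0 with hψe
    set ψo : EuclideanSpace ℝ (Fin d) → ℝ := fun v => (φ v - φ (-v)) / 2 with hψo
    have hce : Continuous ψe := by
      apply Continuous.sub _ continuous_const
      exact (hcont.add (hcont.comp continuous_neg)).div_const 2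
    have hco : Continuous ψo := (hcont.sub (hcont.comp continuous_neg)).div_const 2
    have heven : ∀ v, ψe (-v) = ψe v := by
      intro v; rw [hψe]; dsimp only; rw [neg_neg]; ring
    have hoddo : ∀ v, ψo (-v) = -ψo v := by
      intro v; rw [hψo]; dsimp only; rw [neg_neg]; ring
    have haddbase : ∀ x y : EuclideanSpace ℝ (Fin d), ⟪x, y⟫ = 0 →
        φ (x + y) = φ x + φ y - φ 0 := by
      intro x y hxy
      have := horth x y hxy
      linarith
    have hadde : ∀ x y : EuclideanSpace ℝ (Fin d), ⟪x, y⟫ = 0 →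
        ψe (x + y) = ψe x + ψe y := by
      intro x y hxy
      have h1 := haddbase x y hxy
      have h2 := haddbase (-x) (-y) (by rw [inner_neg_neg]; exact hxy)
      rw [hψe]; dsimp only
      rw [show -(x + y) = -x + -y by module, h1, h2]
      ring
    have haddo : ∀ x y : EuclideanSpace ℝ (Fin d), ⟪x, y⟫ = 0 →
        ψo (x + y) = ψo x + ψo y := by
      intro x y hxy
      have h1 := haddbase x y hxy
      have h2 := haddbase (-x) (-y) (by rw [inner_neg_neg]; exact hxy)
      rw [hψo]; dsimp only
      rw [show -(x + y) = -x + -y by module, h1, h2]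
      ring
    obtain ⟨c, hcrep⟩ := even_char hd ψe hce heven hadde
    obtain ⟨b, hbrep⟩ := odd_char hd ψo hco hoddo haddo
    refine ⟨φ 0, c, b, fun v => ?_⟩
    have h1 := hcrep v
    have h2 := hbrep v
    rw [hψe] at h1; rw [hψo] at h2
    dsimp only at h1 h2
    linarith
  · rintro ⟨α, c, b, hrep⟩ ω₁ ω₂ v₁ v₂ v₃ hΩ
    have hm := collT_mom ω₁ ω₂ v₁ v₂ v₃
    have he := collT_energy ω₁ ω₂ hΩ v₁ v₂ v₃
    have hbm : ⟪b, (collT ω₁ ω₂ (v₁, v₂, v₃)).1⟫ + ⟪b, (collT ω₁ ω₂ (v₁, v₂, v₃)).2.1⟫ +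
        ⟪b, (collT ω₁ ω₂ (v₁, v₂, v₃)).2.2⟫ = ⟪b, v₁⟫ + ⟪b, v₂⟫ + ⟪b, v₃⟫ := by
      rw [← inner_add_right, ← inner_add_right, ← inner_add_right, ← inner_add_right, hm]
    rw [hrep, hrep, hrep, hrep, hrep, hrep]
    linear_combination hbm + c * he
end

section
/- Let d ≥ 2 and 0 < δ₀ < σ₀ < 1 with δ₀ + 2σ₀ < 1. For x_i, x_j ∈ ℝ^d with α = |x_i - x_j|, the set S = {x_k ∈ ℝ^d : σ₀² ≤ |x_i - x_j|² + |x_i - x_k|² ≤ (σ₀+δ₀)²} has Lebesgue measure |S| ≤ C_d δ₀ for a constant C_d depending only on d. -/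
open MeasureTheory Metric

lemma aux_pow_sub (n : ℕ) : ∀ a b : ℝ, 0 ≤ b → b ≤ a → a ≤ 1 →
    a ^ (n + 2) - b ^ (n + 2) ≤ (n + 1 : ℝ) * (a ^ 2 - b ^ 2) := by
  induction n with
  | zero => intro a b hb hba ha; norm_num
  | succ n ih =>
    intro a b hb hba ha
    have h := ih a b hb hba ha
    have ha0 : 0 ≤ a := le_trans hb hba
    have hb1 : b ≤ 1 := le_trans hba ha
    have hbn : b ^ (n + 1) ≤ 1 := pow_le_one₀ hb hb1
    have hbn0 : 0 ≤ b ^ (n + 1) := pow_nonneg hb _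
    have hpow : b ^ (n + 2) ≥ 0 := pow_nonneg hb _
    have hpa : 0 ≤ a ^ (n + 2) - b ^ (n + 2) := by
      have := pow_le_pow_left₀ hb hba (n + 2)
      linarith
    have key : a ^ (n + 3) - b ^ (n + 3) ≤ (a ^ (n + 2) - b ^ (n + 2)) + (a - b) * b ^ (n + 2) := by
      have h3 : a ^ (n + 3) = a * a ^ (n + 2) := by ring
      have hb3 : b ^ (n + 3) = b * b ^ (n + 2) := by ring
      nlinarith [mul_nonneg (sub_nonneg.2 ha) hpa]
    have key2 : (a - b) * b ^ (n + 2) ≤ a ^ 2 - b ^ 2 := by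
      have h1 : (a - b) * b ^ (n + 2) = (a - b) * b * b ^ (n + 1) := by ring
      nlinarith [mul_nonneg (sub_nonneg.2 hba) hb]
    push_cast
    nlinarith

theorem shell_measure_estimate (d : ℕ) (hd : 2 ≤ d) :
    ∃ C : ℝ, 0 < C ∧
      ∀ (σ₀ δ₀ : ℝ), 0 < δ₀ → δ₀ < σ₀ → σ₀ < 1 → δ₀ + 2 * σ₀ < 1 →
        ∀ (xi xj : EuclideanSpace ℝ (Fin d)),
          volume {xk : EuclideanSpace ℝ (Fin d) |
              σ₀ ^ 2 ≤ ‖xi - xj‖ ^ 2 + ‖xi - xk‖ ^ 2 ∧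
                ‖xi - xj‖ ^ 2 + ‖xi - xk‖ ^ 2 ≤ (σ₀ + δ₀) ^ 2} ≤
            ENNReal.ofReal (C * δ₀) := by
  set V : ENNReal := volume (ball (0 : EuclideanSpace ℝ (Fin d)) 1) with hV
  have hVlt : V < ⊤ := measure_ball_lt_top
  refine ⟨d * (V.toReal + 1), by positivity, ?_⟩
  intro σ₀ δ₀ hδ hδσ hσ1 hsum
  obtain ⟨n, rfl⟩ : ∃ n, d = n + 2 := ⟨d - 2, by omega⟩
  intro xi xj
  set α : ℝ := ‖xi - xj‖ with hα
  have hα0 : 0 ≤ α := norm_nonneg _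
  set R : ℝ := Real.sqrt ((σ₀ + δ₀) ^ 2 - α ^ 2) with hR
  set r : ℝ := Real.sqrt (σ₀ ^ 2 - α ^ 2) with hr
  have hR0 : 0 ≤ R := Real.sqrt_nonneg _
  have hr0 : 0 ≤ r := Real.sqrt_nonneg _
  have hrR : r ≤ R := by
    apply Real.sqrt_le_sqrt
    nlinarith
  have hR1 : R ≤ 1 := by
    rw [hR]
    have h1 : (σ₀ + δ₀) ^ 2 - α ^ 2 ≤ 1 := by nlinarith
    calc Real.sqrt ((σ₀ + δ₀) ^ 2 - α ^ 2) ≤ Real.sqrt 1 := Real.sqrt_le_sqrt h1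
      _ = 1 := Real.sqrt_one
  -- R² - r² ≤ δ₀
  have hsq : R ^ 2 - r ^ 2 ≤ δ₀ := by
    rcases le_or_gt 0 (σ₀ ^ 2 - α ^ 2) with h | h
    · have hr2 : r ^ 2 = σ₀ ^ 2 - α ^ 2 := Real.sq_sqrt h
      have hR2 : R ^ 2 = (σ₀ + δ₀) ^ 2 - α ^ 2 := Real.sq_sqrt (by nlinarith)
      nlinarith
    · have hr2 : r = 0 := Real.sqrt_eq_zero_of_nonpos h.le
      rcases le_or_gt 0 ((σ₀ + δ₀) ^ 2 - α ^ 2) with h2 | h2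
      · have hR2 : R ^ 2 = (σ₀ + δ₀) ^ 2 - α ^ 2 := Real.sq_sqrt h2
        nlinarith
      · have hR2 : R = 0 := Real.sqrt_eq_zero_of_nonpos h2.le
        nlinarith
  -- subset
  have hsub : {xk : EuclideanSpace ℝ (Fin (n + 2)) |
      σ₀ ^ 2 ≤ α ^ 2 + ‖xi - xk‖ ^ 2 ∧
        α ^ 2 + ‖xi - xk‖ ^ 2 ≤ (σ₀ + δ₀) ^ 2} ⊆
      closedBall xi R \ ball xi r := by
    intro xk ⟨h1, h2⟩
    have hdist : dist xk xi = ‖xi - xk‖ := by rw [dist_eq_norm, norm_sub_rev]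
    have ht0 : (0 : ℝ) ≤ ‖xi - xk‖ := norm_nonneg _
    constructor
    · rw [mem_closedBall, hdist]
      have : ‖xi - xk‖ ^ 2 ≤ (σ₀ + δ₀) ^ 2 - α ^ 2 := by linarith
      calc ‖xi - xk‖ = Real.sqrt (‖xi - xk‖ ^ 2) := (Real.sqrt_sq ht0).symm
        _ ≤ R := Real.sqrt_le_sqrt this
    · rw [mem_ball, not_lt, hdist]
      have : σ₀ ^ 2 - α ^ 2 ≤ ‖xi - xk‖ ^ 2 := by linarith
      calc r ≤ Real.sqrt (‖xi - xk‖ ^ 2) := Real.sqrt_le_sqrt this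
        _ = ‖xi - xk‖ := Real.sqrt_sq ht0
  have hfin : volume (ball xi r) ≠ ⊤ := measure_ball_lt_top.ne
  have hballsub : ball xi r ⊆ closedBall xi R := (ball_subset_closedBall).trans (closedBall_subset_closedBall hrR)
  have hdiff : volume (closedBall xi R \ ball xi r)
      = volume (closedBall xi R) - volume (ball xi r) :=
    measure_diff hballsub measurableSet_ball.nullMeasurableSet hfin
  have hfr : (Module.finrank ℝ (EuclideanSpace ℝ (Fin (n + 2)))) = n + 2 := finrank_euclideanSpace_fin
  have hcb : volume (closedBall xi R) = ENNReal.ofReal (R ^ (n + 2)) * V := by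
    rw [Measure.addHaar_closedBall volume xi hR0, hfr]
  have hb : volume (ball xi r) = ENNReal.ofReal (r ^ (n + 2)) * V := by
    rw [Measure.addHaar_ball volume xi hr0, hfr]
  -- pow bound
  have hpow : R ^ (n + 2) - r ^ (n + 2) ≤ (n + 2 : ℝ) * δ₀ := by
    have := aux_pow_sub n R r hr0 hrR hR1
    nlinarith
  have hrRpow : ENNReal.ofReal (r ^ (n + 2)) ≤ ENNReal.ofReal (R ^ (n + 2)) :=
    ENNReal.ofReal_le_ofReal (pow_le_pow_left₀ hr0 hrR _)
  calc volume {xk : EuclideanSpace ℝ (Fin (n + 2)) |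
          σ₀ ^ 2 ≤ α ^ 2 + ‖xi - xk‖ ^ 2 ∧
            α ^ 2 + ‖xi - xk‖ ^ 2 ≤ (σ₀ + δ₀) ^ 2}
      ≤ volume (closedBall xi R \ ball xi r) := measure_mono hsub
    _ = ENNReal.ofReal (R ^ (n + 2)) * V - ENNReal.ofReal (r ^ (n + 2)) * V := by
        rw [hdiff, hcb, hb]
    _ = (ENNReal.ofReal (R ^ (n + 2)) - ENNReal.ofReal (r ^ (n + 2))) * V := by
        rw [ENNReal.sub_mul (fun _ _ => hVlt.ne)]
    _ = ENNReal.ofReal (R ^ (n + 2) - r ^ (n + 2)) * V := by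
        rw [ENNReal.ofReal_sub _ (pow_nonneg hr0 _)]
    _ ≤ ENNReal.ofReal ((n + 2 : ℝ) * δ₀) * V := by
        exact mul_le_mul_left (ENNReal.ofReal_le_ofReal hpow) V
    _ = ENNReal.ofReal ((n + 2 : ℝ) * δ₀) * ENNReal.ofReal V.toReal := by
        rw [ENNReal.ofReal_toReal hVlt.ne]
    _ = ENNReal.ofReal ((n + 2 : ℝ) * δ₀ * V.toReal) := by
        rw [← ENNReal.ofReal_mul (show (0:ℝ) ≤ (n + 2 : ℝ) * δ₀ by positivity)]
    _ ≤ ENNReal.ofReal ((n + 2 : ℕ) * (V.toReal + 1) * δ₀) := by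
        apply ENNReal.ofReal_le_ofReal
        have hVt : 0 ≤ V.toReal := ENNReal.toReal_nonneg
        push_cast
        nlinarith
end

section
/- Let d ≥ 2, (ω₁,ω₂) ∈ 𝕊₁^{2d-1}, and set (ω̃₁, ω̃₂) = F(ω₁,ω₂) = (-ω₁-ω₂, ω₂)/√(1+|ω₂|²+2⟨ω₁,ω₂⟩). Then for all v, v₁', v₂' ∈ ℝ^d: (a) b(ω̃₁, ω̃₂, v₁'-v', v₂'-v') = b(ω₁,ω₂, v'-v₁', v₂'-v₁') / √(1+|ω₂|²+2⟨ω₁,ω₂⟩); (b) 1 + ⟨ω̃₁,ω̃₂⟩ = (1+⟨ω₁,ω₂⟩)/(1+|ω₂|²+2⟨ω₁,ω₂⟩). -/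
open RealInnerProductSpace

theorem normalized_involution_cross_section_identities (d : ℕ) (hd : 2 ≤ d)
    (ω₁ ω₂ : EuclideanSpace ℝ (Fin d)) (hω : ‖ω₁‖ ^ 2 + ‖ω₂‖ ^ 2 = 1) :
    let s := Real.sqrt (1 + ‖ω₂‖ ^ 2 + 2 * ⟪ω₁, ω₂⟫)
    let ω₁' := s⁻¹ • (-ω₁ - ω₂)
    let ω₂' := s⁻¹ • ω₂
    ∀ v' v₁' v₂' : EuclideanSpace ℝ (Fin d),
      (⟪ω₁', v₁' - v'⟫ + ⟪ω₂', v₂' - v'⟫ = (⟪ω₁, v' - v₁'⟫ + ⟪ω₂, v₂' - v₁'⟫) / s) ∧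
        1 + ⟪ω₁', ω₂'⟫ = (1 + ⟪ω₁, ω₂⟫) / (1 + ‖ω₂‖ ^ 2 + 2 * ⟪ω₁, ω₂⟫) := by
  intro s ω₁' ω₂' v' v₁' v₂'
  have hE : 1 + ‖ω₂‖ ^ 2 + 2 * ⟪ω₁, ω₂⟫ = ‖ω₁ + ω₂‖ ^ 2 + ‖ω₂‖ ^ 2 := by
    rw [← hω]
    have := norm_add_sq_real ω₁ ω₂
    ring_nf
    ring_nf at this
    linarith
  have hEpos : 0 < 1 + ‖ω₂‖ ^ 2 + 2 * ⟪ω₁, ω₂⟫ := by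
    rw [hE]
    rcases eq_or_ne ω₂ 0 with h2 | h2
    · have h1 : ω₁ ≠ 0 := by
        intro h1; rw [h1, h2] at hω; simp at hω
      have : 0 < ‖ω₁ + ω₂‖ ^ 2 := by
        rw [h2]; simpa using pow_pos (norm_pos_iff.mpr h1) 2
      positivity
    · have : 0 < ‖ω₂‖ ^ 2 := pow_pos (norm_pos_iff.mpr h2) 2
      positivity
  have hs2 : s ^ 2 = 1 + ‖ω₂‖ ^ 2 + 2 * ⟪ω₁, ω₂⟫ := Real.sq_sqrt hEpos.le
  constructor
  · show ⟪s⁻¹ • (-ω₁ - ω₂), v₁' - v'⟫ + ⟪s⁻¹ • ω₂, v₂' - v'⟫ = _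
    rw [real_inner_smul_left, real_inner_smul_left, inner_sub_left, inner_neg_left,
      inner_sub_right, inner_sub_right, inner_sub_right, inner_sub_right, inner_sub_right]
    field_simp
    ring
  · show 1 + ⟪s⁻¹ • (-ω₁ - ω₂), s⁻¹ • ω₂⟫ = _
    have hsne : s ≠ 0 := Real.sqrt_ne_zero'.mpr hEpos
    rw [real_inner_smul_left, real_inner_smul_right, inner_sub_left, inner_neg_left,
      real_inner_self_eq_norm_sq]
    rw [eq_div_iff hEpos.ne', ← hs2]
    have h := inv_mul_cancel₀ hsne
    linear_combination hs2 + (-⟪ω₁, ω₂⟫ - ‖ω₂‖ ^ 2) * (s⁻¹ * s + 1) * h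
end

section
/- Let t > 0, δ > 0, k ≥ 1 and 0 ≤ i ≤ k-1. Define F_i(t) = {(t₁,...,t_k) ∈ ℝ^k : 0 ≤ t_k < ... < t₁ ≤ t and t_i - δ < t_{i+1} ≤ t_i}, with the convention t₀ = t. Then the Lebesgue measure of F_i(t) in ℝ^k is at most δ t^{k-1}/(k-1)!. -/
open MeasureTheory

/-- The collision time `t_m` for `1 ≤ m ≤ k` encoded by `f : Fin k → ℝ`, with the
convention `t₀ = t` (and junk value `t` outside the range). -/
def timeOf (k : ℕ) (t : ℝ) (f : Fin k → ℝ) (m : ℕ) : ℝ :=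
  if h : 1 ≤ m ∧ m ≤ k then f ⟨m - 1, by omega⟩ else t

/-- The closed ordered simplex: decreasing sequences with values in `[0, t]`. -/
def orderedBox (n : ℕ) (t : ℝ) : Set (Fin n → ℝ) :=
  {g | (∀ j : Fin n, 0 ≤ g j ∧ g j ≤ t) ∧
       ∀ (j : Fin n) (hj : (j : ℕ) + 1 < n), g ⟨(j : ℕ) + 1, hj⟩ ≤ g j}

lemma isClosed_orderedBox (n : ℕ) (t : ℝ) : IsClosed (orderedBox n t) := by
  have h1 : IsClosed {g : Fin n → ℝ | ∀ j : Fin n, 0 ≤ g j ∧ g j ≤ t} := by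
    rw [Set.setOf_forall]
    exact isClosed_iInter fun j => ((isClosed_le continuous_const (continuous_apply j)).inter
      (isClosed_le (continuous_apply j) continuous_const))
  have h2 : IsClosed {g : Fin n → ℝ |
      ∀ (j : Fin n) (hj : (j : ℕ) + 1 < n), g ⟨(j : ℕ) + 1, hj⟩ ≤ g j} := by
    rw [Set.setOf_forall]
    refine isClosed_iInter fun j => ?_
    rw [Set.setOf_forall]
    exact isClosed_iInter fun hj =>
      isClosed_le (continuous_apply _) (continuous_apply _)
  exact h1.inter h2

lemma chain_le {n : ℕ} {g : Fin n → ℝ}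
    (h : ∀ (j : Fin n) (hj : (j : ℕ) + 1 < n), g ⟨(j : ℕ) + 1, hj⟩ ≤ g j) :
    ∀ a b : Fin n, a ≤ b → g b ≤ g a := by
  suffices H : ∀ m : ℕ, ∀ a b : Fin n, (b : ℕ) = (a : ℕ) + m → g b ≤ g a by
    intro a b hab
    exact H ((b : ℕ) - (a : ℕ)) a b (by omega)
  intro m
  induction m with
  | zero => intro a b hb; have : a = b := Fin.ext (by omega); rw [this]
  | succ m ih =>
    intro a b hb
    have hc : (a : ℕ) + m < n := by have := b.isLt; omega
    have h1 : g b ≤ g ⟨(a : ℕ) + m, hc⟩ := by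
      have := h ⟨(a : ℕ) + m, hc⟩ (by simpa using by omega)
      have hbeq : b = ⟨(a : ℕ) + m + 1, by omega⟩ := Fin.ext (by show (b : ℕ) = (a : ℕ) + m + 1; omega)
      rw [hbeq]; exact this
    exact h1.trans (ih a ⟨(a : ℕ) + m, hc⟩ rfl)

lemma orderedBox_volume : ∀ (n : ℕ) (t : ℝ), 0 ≤ t →
    volume (orderedBox n t) ≤ ENNReal.ofReal (t ^ n / (Nat.factorial n)) := by
  intro n
  induction n with
  | zero =>
    intro t ht
    have : orderedBox 0 t = Set.univ := by
      ext g; simp [orderedBox, Fin.forall_iff]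
    rw [this]
    rw [volume_pi, Measure.pi_univ]
    simp
  | succ n ih =>
    intro t ht
    set e := MeasurableEquiv.piFinSuccAbove (fun _ : Fin (n + 1) => ℝ) 0 with he
    have mp := volume_preserving_piFinSuccAbove (fun _ : Fin (n + 1) => ℝ) 0
    set A : Set (ℝ × (Fin n → ℝ)) :=
      {p | p.1 ∈ Set.Icc 0 t ∧ p.2 ∈ orderedBox n p.1} with hA
    have hAm : MeasurableSet A := by
      have : IsClosed A := by
        have h1 : IsClosed {p : ℝ × (Fin n → ℝ) | p.1 ∈ Set.Icc 0 t} :=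
          (isClosed_Icc).preimage continuous_fst
        have h2 : IsClosed {p : ℝ × (Fin n → ℝ) | p.2 ∈ orderedBox n p.1} := by
          have h3 : IsClosed {p : ℝ × (Fin n → ℝ) | ∀ j : Fin n, 0 ≤ p.2 j ∧ p.2 j ≤ p.1} := by
            rw [Set.setOf_forall]
            exact isClosed_iInter fun j =>
              ((isClosed_le continuous_const ((continuous_apply j).comp continuous_snd)).inter
                (isClosed_le ((continuous_apply j).comp continuous_snd) continuous_fst))
          have h4 : IsClosed {p : ℝ × (Fin n → ℝ) |
              ∀ (j : Fin n) (hj : (j : ℕ) + 1 < n), p.2 ⟨(j : ℕ) + 1, hj⟩ ≤ p.2 j} := by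
            rw [Set.setOf_forall]
            refine isClosed_iInter fun j => ?_
            rw [Set.setOf_forall]
            exact isClosed_iInter fun hj =>
              isClosed_le ((continuous_apply _).comp continuous_snd)
                ((continuous_apply _).comp continuous_snd)
          exact h3.inter h4
        exact h1.inter h2
      exact this.measurableSet
    have hsub : orderedBox (n + 1) t = e ⁻¹' A := by
      ext f
      constructor
      · rintro ⟨hb, hc⟩
        refine ⟨⟨(hb 0).1, (hb 0).2⟩, ?_, ?_⟩
        · intro j
          refine ⟨(hb _).1, ?_⟩
          exact chain_le hc 0 (Fin.succAbove 0 j) (Fin.zero_le _)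
        · intro j hj
          have hm : Fin.succAbove 0 j ≤ Fin.succAbove 0 ⟨(j : ℕ) + 1, hj⟩ :=
            le_of_lt ((Fin.strictMono_succAbove 0) (by simp [Fin.lt_def]))
          exact chain_le hc _ _ hm
      · rintro ⟨⟨h0, h0t⟩, hbnd, hch⟩
        constructor
        · intro j
          rcases Fin.eq_zero_or_eq_succ j with rfl | ⟨j', rfl⟩
          · exact ⟨h0, h0t⟩
          · have := hbnd j'
            have hsa : Fin.succAbove 0 j' = Fin.succ j' := rfl
            exact ⟨this.1, le_trans this.2 h0t⟩
        · intro j hj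
          rcases Fin.eq_zero_or_eq_succ j with rfl | ⟨j', rfl⟩
          · have := (hbnd ⟨0, by omega⟩).2
            convert this using 2
            all_goals rfl
          · have hj' : (j' : ℕ) + 1 < n := by simpa using hj
            have := hch j' hj'
            convert this using 2
            all_goals rfl
    rw [hsub, mp.measure_preimage hAm.nullMeasurableSet, Measure.volume_eq_prod _ _, Measure.prod_apply hAm]
    have hslice : ∀ x : ℝ,
        (volume : Measure (Fin n → ℝ)) (Prod.mk x ⁻¹' A) ≤
          (Set.Icc (0:ℝ) t).indicator (fun x => ENNReal.ofReal (x ^ n / (Nat.factorial n))) x := by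
      intro x
      by_cases hx : x ∈ Set.Icc (0:ℝ) t
      · rw [Set.indicator_of_mem hx]
        have : Prod.mk x ⁻¹' A = {y | x ∈ Set.Icc (0:ℝ) t ∧ y ∈ orderedBox n x} := rfl
        rw [this]
        refine le_trans (measure_mono ?_) (ih x hx.1)
        intro y hy; exact hy.2
      · rw [Set.indicator_of_notMem hx]
        have : Prod.mk x ⁻¹' A = ∅ := by
          ext y; simp only [Set.mem_preimage, hA, Set.mem_setOf_eq, Set.mem_empty_iff_false]
          tauto
        simp [this]
    refine le_trans (lintegral_mono hslice) ?_
    rw [lintegral_indicator measurableSet_Icc]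
    have hint : IntegrableOn (fun x : ℝ => x ^ n / (Nat.factorial n)) (Set.Icc 0 t) :=
      (Continuous.integrableOn_Icc (by continuity))
    have hnn : 0 ≤ᵐ[volume.restrict (Set.Icc (0:ℝ) t)] fun x : ℝ => x ^ n / (Nat.factorial n) := by
      filter_upwards [ae_restrict_mem measurableSet_Icc] with x hx
      exact div_nonneg (pow_nonneg hx.1 n) (by positivity)
    rw [← ofReal_integral_eq_lintegral_ofReal hint hnn]
    have hval : ∫ x in Set.Icc (0:ℝ) t, x ^ n / (Nat.factorial n) =
        t ^ (n + 1) / (Nat.factorial (n + 1)) := by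
      rw [MeasureTheory.integral_Icc_eq_integral_Ioc,
        ← intervalIntegral.integral_of_le ht, intervalIntegral.integral_div,
        integral_pow]
      rw [Nat.factorial_succ]
      have h1 : ((n : ℝ) + 1) ≠ 0 := by positivity
      have h2 : ((Nat.factorial n : ℝ)) ≠ 0 := by positivity
      push_cast
      field_simp
      simp
    rw [hval]

def cval (n i : ℕ) (t : ℝ) (y : Fin n → ℝ) : ℝ :=
  if h : 1 ≤ i ∧ i ≤ n then y ⟨i - 1, by omega⟩ else t

lemma measurable_cval (n i : ℕ) (t : ℝ) : Measurable (cval n i t) := by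
  unfold cval
  by_cases h : 1 ≤ i ∧ i ≤ n
  · simp only [h, dif_pos]; exact measurable_pi_apply _
  · simp only [h, dif_neg, not_false_iff]; exact measurable_const

theorem collision_times_window_measure (k : ℕ) (hk : 1 ≤ k) (i : ℕ) (hi : i ≤ k - 1)
    (t δ : ℝ) (ht : 0 < t) (hδ : 0 < δ) :
    volume {f : Fin k → ℝ |
        (∀ (j : Fin k) (hj : (j : ℕ) + 1 < k), f ⟨(j : ℕ) + 1, hj⟩ < f j) ∧
        0 ≤ f ⟨k - 1, by omega⟩ ∧ f ⟨0, by omega⟩ ≤ t ∧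
        timeOf k t f i - δ < timeOf k t f (i + 1) ∧ timeOf k t f (i + 1) ≤ timeOf k t f i} ≤
      ENNReal.ofReal (δ * t ^ (k - 1) / (Nat.factorial (k - 1))) := by
  obtain ⟨n, rfl⟩ : ∃ n, k = n + 1 := ⟨k - 1, by omega⟩
  have hin : i ≤ n := by omega
  set p : Fin (n + 1) := ⟨i, by omega⟩ with hp
  set e := MeasurableEquiv.piFinSuccAbove (fun _ : Fin (n + 1) => ℝ) p with he
  have mp := volume_preserving_piFinSuccAbove (fun _ : Fin (n + 1) => ℝ) p
  set B : Set (ℝ × (Fin n → ℝ)) :=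
    {q | q.2 ∈ orderedBox n t ∧ cval n i t q.2 - δ < q.1 ∧ q.1 ≤ cval n i t q.2} with hB
  have hBm : MeasurableSet B := by
    refine MeasurableSet.inter ?_ (MeasurableSet.inter ?_ ?_)
    · exact measurable_snd (isClosed_orderedBox n t).measurableSet
    · exact measurableSet_lt (((measurable_cval n i t).comp measurable_snd).sub
        measurable_const) measurable_fst
    · exact measurableSet_le measurable_fst ((measurable_cval n i t).comp measurable_snd)
  have hsub : {f : Fin (n + 1) → ℝ |
      (∀ (j : Fin (n + 1)) (hj : (j : ℕ) + 1 < n + 1), f ⟨(j : ℕ) + 1, hj⟩ < f j) ∧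
      0 ≤ f ⟨n + 1 - 1, by omega⟩ ∧ f ⟨0, by omega⟩ ≤ t ∧
      timeOf (n + 1) t f i - δ < timeOf (n + 1) t f (i + 1) ∧
      timeOf (n + 1) t f (i + 1) ≤ timeOf (n + 1) t f i} ⊆ e ⁻¹' B := by
    rintro f ⟨hlt, h0, hT, hw1, hw2⟩
    have hle : ∀ (j : Fin (n + 1)) (hj : (j : ℕ) + 1 < n + 1),
        f ⟨(j : ℕ) + 1, hj⟩ ≤ f j := fun j hj => le_of_lt (hlt j hj)
    have hall : ∀ m : Fin (n + 1), 0 ≤ f m ∧ f m ≤ t := by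
      intro m
      constructor
      · exact le_trans h0 (chain_le hle m ⟨n, by omega⟩ (by simp [Fin.le_def]; omega))
      · exact le_trans (chain_le hle ⟨0, by omega⟩ m (by simp [Fin.le_def])) hT
    have hti1 : timeOf (n + 1) t f (i + 1) = f p := by
      have h1 : 1 ≤ i + 1 ∧ i + 1 ≤ n + 1 := ⟨by omega, by omega⟩
      simp only [timeOf, dif_pos h1]
      congr 1
    have hti : timeOf (n + 1) t f i = cval n i t ((e f).2) := by
      by_cases h1 : 1 ≤ i
      · have h2 : 1 ≤ i ∧ i ≤ n + 1 := ⟨h1, by omega⟩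
        have h3 : 1 ≤ i ∧ i ≤ n := ⟨h1, hin⟩
        simp only [timeOf, dif_pos h2, cval, dif_pos h3]
        have : (e f).2 ⟨i - 1, by omega⟩ = f (p.succAbove ⟨i - 1, by omega⟩) := rfl
        rw [this]
        congr 1
        rw [Fin.succAbove_of_castSucc_lt]
        · rfl
        · simp [Fin.lt_def, hp]; omega
      · have h2 : ¬(1 ≤ i ∧ i ≤ n + 1) := by omega
        have h3 : ¬(1 ≤ i ∧ i ≤ n) := by omega
        simp only [timeOf, dif_neg h2, cval, dif_neg h3]
    refine ⟨⟨fun j => hall _, ?_⟩, ?_, ?_⟩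
    · intro j hj
      have hm : p.succAbove j ≤ p.succAbove ⟨(j : ℕ) + 1, hj⟩ :=
        le_of_lt ((Fin.strictMono_succAbove p) (by simp [Fin.lt_def]))
      exact chain_le hle _ _ hm
    · rw [← hti]
      have : (e f).1 = f p := rfl
      rw [this, ← hti1]
      exact hw1
    · have : (e f).1 = f p := rfl
      rw [this, ← hti1, ← hti]
      exact hw2
  refine le_trans (measure_mono hsub) ?_
  rw [mp.measure_preimage hBm.nullMeasurableSet, Measure.volume_eq_prod _ _, Measure.prod_apply_symm hBm]
  have hslice : ∀ y : Fin n → ℝ,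
      (volume : Measure ℝ) ((fun x => (x, y)) ⁻¹' B) ≤
        (orderedBox n t).indicator (fun _ => ENNReal.ofReal δ) y := by
    intro y
    by_cases hy : y ∈ orderedBox n t
    · rw [Set.indicator_of_mem hy]
      have hsub2 : (fun x => (x, y)) ⁻¹' B ⊆ Set.Ioc (cval n i t y - δ) (cval n i t y) := by
        intro x hx; exact ⟨hx.2.1, hx.2.2⟩
      refine le_trans (measure_mono hsub2) ?_
      rw [Real.volume_Ioc]
      simp
    · rw [Set.indicator_of_notMem hy]
      have : (fun x => (x, y)) ⁻¹' B = ∅ := by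
        ext x; simp only [Set.mem_preimage, hB, Set.mem_setOf_eq, Set.mem_empty_iff_false]
        tauto
      simp [this]
  refine le_trans (lintegral_mono hslice) ?_
  rw [lintegral_indicator (isClosed_orderedBox n t).measurableSet]
  rw [setLIntegral_const]
  calc ENNReal.ofReal δ * volume (orderedBox n t)
      ≤ ENNReal.ofReal δ * ENNReal.ofReal (t ^ n / (Nat.factorial n)) := by
        exact mul_le_mul_right (orderedBox_volume n t ht.le) _
    _ = ENNReal.ofReal (δ * t ^ n / (Nat.factorial n)) := by
        rw [← ENNReal.ofReal_mul hδ.le, mul_div_assoc]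
    _ = ENNReal.ofReal (δ * t ^ (n + 1 - 1) / (Nat.factorial (n + 1 - 1))) := by norm_num
end
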